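/- arXiv:2408.16631 — 2 statements merged into one kernel-verified Lean document; each statement's English description precedes it below -/
import Mathlib

section
/- Let (u₁, v₁), (u₂, v₂) ∈ ℂ² and let M be the complex 2 × 2 matrix with these rows. Then the smallest singular value of M satisfies σ_min(M)² = ½·(‖a₁‖ + ‖a₂‖ − ‖a₁ + a₂‖), where a₁ = H(u₁, v₁) and a₂ = H(u₂, v₂) are Hopf images in ℝ³. Equivalently, the minimum over unit vectors (u, v) ∈ ℂ² of |u₁·conj(u) + v₁·conj(v)|² + |u₂·conj(u) + v₂·conj(v)|² equals ½·(‖a₁‖ + ‖a₂‖ − ‖a₁ + a₂‖). -/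
open Complex

/-- The Hopf map `ℂ² → ℝ³`:
`H(u, v) = (2 Re(conj u * v), −2 Im(conj u * v), |u|² − |v|²)`. -/
noncomputable def hopfMap (u v : ℂ) : EuclideanSpace ℝ (Fin 3) :=
  (WithLp.equiv 2 (Fin 3 → ℝ)).symm
    ![2 * ((starRingEnd ℂ) u * v).re, -2 * ((starRingEnd ℂ) u * v).im,
      ‖u‖ ^ 2 - ‖v‖ ^ 2]

/-!
With `a = ‖u₁‖² + ‖u₂‖²`, `c = ‖v₁‖² + ‖v₂‖²` and `b = u₁ v̄₁ + u₂ v̄₂`, the minimised quantity is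
the Hermitian form of `!![a, b; conj b, c]` at `(u, v)`. Its minimum on the unit sphere is the
smaller eigenvalue `λ = (a + c - √((a - c)² + 4‖b‖²)) / 2`: the form shifted by `λ` has diagonal
`a - λ, c - λ ≥ 0` and determinant `0`, so it is positive semidefinite and vanishes somewhere on
the sphere. On the Hopf side, `‖a₁‖ + ‖a₂‖ = a + c` and `‖a₁ + a₂‖² = (a - c)² + 4‖b‖²`.
-/

open ComplexConjugate

noncomputable section

/-- The Hermitian form `z ↦ zᴴ G z` on `ℂ²` of the matrix `G = !![a, b; conj b, c]`. -/
def hermForm (a c : ℝ) (b x y : ℂ) : ℝ :=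
  a * ‖x‖ ^ 2 + c * ‖y‖ ^ 2 + 2 * (b * conj x * y).re

/-- The smaller eigenvalue of `!![a, b; conj b, c]`. -/
def hermFormMin (a c : ℝ) (b : ℂ) : ℝ :=
  (a + c - √((a - c) ^ 2 + 4 * ‖b‖ ^ 2)) / 2

section HermForm

variable (a c : ℝ) (b : ℂ)

lemma hermForm_sub (m : ℝ) (x y : ℂ) :
    hermForm a c b x y - m * (‖x‖ ^ 2 + ‖y‖ ^ 2) = hermForm (a - m) (c - m) b x y := by
  unfold hermForm; ring

lemma hermForm_mul_ofReal (t : ℝ) (x y : ℂ) :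
    hermForm a c b (x * t) (y * t) = t ^ 2 * hermForm a c b x y := by
  simp only [hermForm, norm_mul, norm_real, Real.norm_eq_abs, mul_pow, sq_abs, map_mul,
    conj_ofReal]
  have : b * (conj x * t) * (y * t) = (t ^ 2 : ℝ) * (b * conj x * y) := by push_cast; ring
  rw [this, re_ofReal_mul]; ring

variable {a c b}

lemma hermForm_nonneg (ha : 0 ≤ a) (hc : 0 ≤ c) (hb : ‖b‖ ^ 2 ≤ a * c) (x y : ℂ) :
    0 ≤ hermForm a c b x y := by
  have hre : (2 * (b * conj x * y).re) ^ 2 ≤ (a * ‖x‖ ^ 2 + c * ‖y‖ ^ 2) ^ 2 := by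
    have h : (b * conj x * y).re ^ 2 ≤ ‖b‖ ^ 2 * (‖x‖ * ‖y‖) ^ 2 := by
      rw [sq, ← mul_pow, ← RCLike.norm_conj x, ← norm_mul, ← norm_mul, ← mul_assoc,
        ← normSq_eq_norm_sq]
      exact re_sq_le_normSq _
    nlinarith [sq_nonneg (a * ‖x‖ ^ 2 - c * ‖y‖ ^ 2),
      mul_le_mul_of_nonneg_right hb (sq_nonneg (‖x‖ * ‖y‖))]
  have := abs_le_of_sq_le_sq hre (by positivity)
  unfold hermForm
  linarith [neg_abs_le (2 * (b * conj x * y).re)]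

/-- The witness is `(1, 0)` if `a = 0`, and a normalisation of `(-b, a)` otherwise. -/
lemma exists_hermForm_eq_zero (hb : ‖b‖ ^ 2 = a * c) :
    ∃ x y : ℂ, ‖x‖ ^ 2 + ‖y‖ ^ 2 = 1 ∧ hermForm a c b x y = 0 := by
  rcases eq_or_ne a 0 with rfl | ha
  · exact ⟨1, 0, by simp, by simp [hermForm]⟩
  set n := √(‖b‖ ^ 2 + a ^ 2)
  have hn : n ^ 2 = ‖b‖ ^ 2 + a ^ 2 := Real.sq_sqrt (by positivity)
  have hn0 : n ^ 2 ≠ 0 := by rw [hn]; positivity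
  refine ⟨-b * (n⁻¹ : ℝ), a * (n⁻¹ : ℝ), ?_, ?_⟩
  · simp only [norm_mul, norm_neg, norm_real, Real.norm_eq_abs, mul_pow, sq_abs, inv_pow]
    rw [← add_mul, ← hn, mul_inv_cancel₀ hn0]
  · have hre : (b * conj (-b) * a).re = -a * ‖b‖ ^ 2 := by
      rw [map_neg, mul_neg, mul_conj', ← ofReal_pow, ← ofReal_neg, ← ofReal_mul, ofReal_re]
      ring
    rw [hermForm_mul_ofReal, hermForm, hre]
    simp only [norm_neg, norm_real, Real.norm_eq_abs, sq_abs]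
    linear_combination (-n⁻¹ ^ 2 * a) * hb

variable (a c b)

lemma abs_sub_le_sqrt_discr : |a - c| ≤ √((a - c) ^ 2 + 4 * ‖b‖ ^ 2) :=
  Real.abs_le_sqrt (by nlinarith [sq_nonneg ‖b‖])

lemma hermFormMin_le_left : hermFormMin a c b ≤ a := by
  have := abs_sub_le_sqrt_discr a c b
  unfold hermFormMin; linarith [le_abs_self (c - a), abs_sub_comm a c]

lemma hermFormMin_le_right : hermFormMin a c b ≤ c := by
  have := abs_sub_le_sqrt_discr a c b
  unfold hermFormMin; linarith [le_abs_self (a - c)]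

lemma sub_hermFormMin_mul_sub_hermFormMin :
    (a - hermFormMin a c b) * (c - hermFormMin a c b) = ‖b‖ ^ 2 := by
  have := Real.sq_sqrt (by positivity : 0 ≤ (a - c) ^ 2 + 4 * ‖b‖ ^ 2)
  unfold hermFormMin; linear_combination this / 4

theorem isLeast_hermForm :
    IsLeast {t | ∃ x y : ℂ, ‖x‖ ^ 2 + ‖y‖ ^ 2 = 1 ∧ t = hermForm a c b x y}
      (hermFormMin a c b) := by
  set m := hermFormMin a c b
  have hsub (x y : ℂ) (hxy : ‖x‖ ^ 2 + ‖y‖ ^ 2 = 1) :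
      hermForm a c b x y - m = hermForm (a - m) (c - m) b x y := by
    rw [← hermForm_sub, hxy, mul_one]
  constructor
  · obtain ⟨x, y, hxy, h0⟩ :=
      exists_hermForm_eq_zero (sub_hermFormMin_mul_sub_hermFormMin a c b).symm
    exact ⟨x, y, hxy, by linarith [hsub x y hxy]⟩
  · rintro t ⟨x, y, hxy, rfl⟩
    have := hermForm_nonneg (sub_nonneg.2 (hermFormMin_le_left a c b))
      (sub_nonneg.2 (hermFormMin_le_right a c b))
      (sub_hermFormMin_mul_sub_hermFormMin a c b).ge x y
    linarith [hsub x y hxy]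

end HermForm

section Hopf

variable (u₁ v₁ u₂ v₂ : ℂ)

lemma norm_hopfMap (u v : ℂ) : ‖hopfMap u v‖ = ‖u‖ ^ 2 + ‖v‖ ^ 2 := by
  rw [← sq_eq_sq₀ (norm_nonneg _) (by positivity), EuclideanSpace.norm_sq_eq]
  simp only [hopfMap, Fin.sum_univ_three, WithLp.equiv_symm_apply, PiLp.toLp_apply,
    Matrix.cons_val, Real.norm_eq_abs, sq_abs, Complex.sq_norm, normSq_apply, mul_re, mul_im,
    conj_re, conj_im]
  ring

lemma norm_hopfMap_add_sq :
    ‖hopfMap u₁ v₁ + hopfMap u₂ v₂‖ ^ 2 =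
      (‖u₁‖ ^ 2 + ‖u₂‖ ^ 2 - (‖v₁‖ ^ 2 + ‖v₂‖ ^ 2)) ^ 2
        + 4 * ‖u₁ * conj v₁ + u₂ * conj v₂‖ ^ 2 := by
  rw [EuclideanSpace.norm_sq_eq]
  simp only [hopfMap, Fin.sum_univ_three, WithLp.equiv_symm_apply, PiLp.add_apply,
    Matrix.cons_val, Real.norm_eq_abs, sq_abs, Complex.sq_norm, normSq_apply,
    mul_re, mul_im, add_re, add_im, conj_re, conj_im]
  ring

lemma norm_sq_add_norm_sq_eq_hermForm (u v : ℂ) :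
    ‖u₁ * conj u + v₁ * conj v‖ ^ 2 + ‖u₂ * conj u + v₂ * conj v‖ ^ 2 =
      hermForm (‖u₁‖ ^ 2 + ‖u₂‖ ^ 2) (‖v₁‖ ^ 2 + ‖v₂‖ ^ 2) (u₁ * conj v₁ + u₂ * conj v₂) u v := by
  simp only [hermForm, Complex.sq_norm, normSq_apply, mul_re, mul_im, add_re, add_im, conj_re,
    conj_im]
  ring

end Hopf

end

/-- For `(u₁, v₁), (u₂, v₂) ∈ ℂ²`, the squared smallest singular value of the complex
`2 × 2` matrix with these rows — i.e. the minimum over Hermitian-unit `(u, v) ∈ ℂ²` of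
`|u₁ conj u + v₁ conj v|² + |u₂ conj u + v₂ conj v|²` — equals
`½ (‖a₁‖ + ‖a₂‖ − ‖a₁ + a₂‖)`, where `a₁ = H(u₁, v₁)` and `a₂ = H(u₂, v₂)`. -/
theorem sigma_min_sq_eq_hopf (u₁ v₁ u₂ v₂ : ℂ) :
    IsLeast
      { t : ℝ | ∃ u v : ℂ, ‖u‖ ^ 2 + ‖v‖ ^ 2 = 1 ∧
          t = ‖u₁ * (starRingEnd ℂ) u + v₁ * (starRingEnd ℂ) v‖ ^ 2
            + ‖u₂ * (starRingEnd ℂ) u + v₂ * (starRingEnd ℂ) v‖ ^ 2 }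
      ((1 / 2) * (‖hopfMap u₁ v₁‖ + ‖hopfMap u₂ v₂‖
        - ‖hopfMap u₁ v₁ + hopfMap u₂ v₂‖)) := by
  have hmin : (1 / 2) * (‖hopfMap u₁ v₁‖ + ‖hopfMap u₂ v₂‖ - ‖hopfMap u₁ v₁ + hopfMap u₂ v₂‖) =
      hermFormMin (‖u₁‖ ^ 2 + ‖u₂‖ ^ 2) (‖v₁‖ ^ 2 + ‖v₂‖ ^ 2) (u₁ * conj v₁ + u₂ * conj v₂) := by
    rw [hermFormMin, ← norm_hopfMap_add_sq, Real.sqrt_sq (norm_nonneg _), norm_hopfMap,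
      norm_hopfMap]
    ring
  simp_rw [norm_sq_add_norm_sq_eq_hermForm u₁ v₁ u₂ v₂, hmin]
  exact isLeast_hermForm _ _ _
end

section
/- There exists a complex 4 × 2 matrix A with orthonormal columns (AᴴA = I₂) such that every 2 × 2 submatrix of A formed by two distinct rows has smallest singular value strictly less than 1/2 = 1/√4. Consequently, the bound of the Goreinov–Tyrtyshnikov–Zamarashkin hypothesis for k = 2, which is sharp in the real case, fails in the complex case: every 2 × 2 submatrix of this A has an inverse of spectral norm strictly greater than √4 = 2. -/
open Matrix Complex

/-!
Take `A = w • B` with `B = [[2, 1], [2, -1], [1, 2i], [1, -2i]]` and `w = (3 + i) / 10`.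
The columns of `B` are orthogonal of squared length `10`, and `|w|² = 1/10` (the phase of `w`
lets us normalise without `√10`), so `Aᴴ A = 1`. For each pair of rows of `B` there is a unit
vector `x` with `‖B_{ij} x‖² ≤ 7/3 < 10/4`; the imaginary entries `±2i` are what make this
possible, as over `ℝ` some pair of rows always has `σ_min² ≥ 10/4`.
-/

theorem conjTranspose_smul_mul_smul {R m n : Type*} [Fintype m] [CommSemiring R] [StarRing R]
    (c : R) (B : Matrix m n R) : (c • B)ᴴ * (c • B) = (star c * c) • (Bᴴ * B) := by
  rw [conjTranspose_smul, smul_mul, Matrix.mul_smul, smul_smul]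

/-- `‖M' x‖²`, where `M'` is the `2 × 2` submatrix of `M` on the rows `i, j` and `x = (u, v)`. -/
def twoRowNormSq {𝕜 m : Type*} [NormedField 𝕜] (M : Matrix m (Fin 2) 𝕜) (i j : m) (u v : 𝕜) :
    ℝ :=
  ‖M i 0 * u + M i 1 * v‖ ^ 2 + ‖M j 0 * u + M j 1 * v‖ ^ 2

section twoRowNormSq

variable {𝕜 m : Type*} [NormedField 𝕜]

theorem twoRowNormSq_comm (M : Matrix m (Fin 2) 𝕜) (i j : m) (u v : 𝕜) :
    twoRowNormSq M i j u v = twoRowNormSq M j i u v :=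
  add_comm _ _

theorem twoRowNormSq_smul (c : 𝕜) (M : Matrix m (Fin 2) 𝕜) (i j : m) (u v : 𝕜) :
    twoRowNormSq (c • M) i j u v = ‖c‖ ^ 2 * twoRowNormSq M i j u v := by
  simp only [twoRowNormSq, Matrix.smul_apply, smul_eq_mul, mul_assoc, ← mul_add, norm_mul]
  ring

end twoRowNormSq

def unnormalizedCounterexample : Matrix (Fin 4) (Fin 2) ℂ :=
  !![2, 1; 2, -1; 1, 2 * I; 1, -2 * I]

theorem unnormalizedCounterexample_conjTranspose_mul_self :
    unnormalizedCounterexampleᴴ * unnormalizedCounterexample = (10 : ℂ) • 1 := by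
  ext i j
  fin_cases i <;> fin_cases j <;>
    simp [unnormalizedCounterexample, mul_apply, Fin.sum_univ_four, Complex.ext_iff] <;> norm_num

theorem exists_unit_twoRowNormSq_unnormalizedCounterexample_le {i j : Fin 4} (hij : i ≠ j) :
    ∃ u v : ℂ, ‖u‖ ^ 2 + ‖v‖ ^ 2 = 1 ∧
      twoRowNormSq unnormalizedCounterexample i j u v ≤ 7 / 3 := by
  wlog hlt : i < j generalizing i j
  · simp only [twoRowNormSq_comm _ i j]
    exact this hij.symm (lt_of_le_of_ne (not_lt.mp hlt) hij.symm)
  fin_cases i <;> fin_cases j <;> (try exact absurd hlt (by decide)) <;>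
    [refine ⟨0, 1, ?_⟩;
     refine ⟨(-2 - I) / 3, 2 / 3, ?_⟩;
     refine ⟨(-2 - I) / 3, 2 / 3 * I, ?_⟩;
     refine ⟨(-2 - I) / 3, -2 / 3 * I, ?_⟩;
     refine ⟨(-2 - I) / 3, -2 / 3, ?_⟩;
     refine ⟨1, 0, ?_⟩] <;>
  · simp only [twoRowNormSq, unnormalizedCounterexample, Complex.sq_norm, normSq_apply]
    norm_num

/-- There exists a complex `4 × 2` matrix `A` with orthonormal columns (`Aᴴ * A = 1`)
such that every `2 × 2` submatrix of `A` formed by two distinct rows has smallest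
singular value strictly less than `1/2 = 1/√4`: for each pair of distinct rows `i ≠ j`
there is a Hermitian-unit vector `(u, v) ∈ ℂ²` with `‖Mx‖ < 1/2` for the corresponding
submatrix `M`. Hence the bound of the Goreinov–Tyrtyshnikov–Zamarashkin hypothesis for
`k = 2`, sharp in the real case, fails in the complex case. -/
theorem exists_complex_counterexample :
    ∃ A : Matrix (Fin 4) (Fin 2) ℂ, Aᴴ * A = 1 ∧
      ∀ i j : Fin 4, i ≠ j →
        ∃ u v : ℂ, ‖u‖ ^ 2 + ‖v‖ ^ 2 = 1 ∧
          Real.sqrt (‖A i 0 * u + A i 1 * v‖ ^ 2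
            + ‖A j 0 * u + A j 1 * v‖ ^ 2) < 1 / 2 := by
  have hw : ‖(3 + I) / 10‖ ^ 2 = 1 / 10 := by
    rw [Complex.sq_norm, normSq_apply]; norm_num
  refine ⟨((3 + I) / 10) • unnormalizedCounterexample, ?_, fun i j hij => ?_⟩
  · rw [conjTranspose_smul_mul_smul, unnormalizedCounterexample_conjTranspose_mul_self,
      smul_smul, Complex.star_def, Complex.conj_mul', ← ofReal_pow, hw]
    norm_num
  · obtain ⟨u, v, hunit, hle⟩ := exists_unit_twoRowNormSq_unnormalizedCounterexample_le hij
    refine ⟨u, v, hunit, (Real.sqrt_lt' one_half_pos).2 ?_⟩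
    change twoRowNormSq _ i j u v < _
    rw [twoRowNormSq_smul, hw]
    linarith
end
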